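/- In an MVR chain graph G, distinct vertices u and v are collider connected if and only if there exists a chain component τ of G such that either (1) u, v ∈ τ, or (2) u ∈ τ and v ∈ pa_G(τ), or (3) v ∈ τ and u ∈ pa_G(τ), or (4) u, v ∈ pa_G(τ). -/

import Mathlib

namespace MVR

universe u v

/-- A mixed graph with directed (`dir u v` means `u → v`) and bidirected
(`bi u v` means `u ↔ v`) edges between distinct vertices. -/
structure MixedGraph (V : Type u) where
  dir : V → V → Prop
  bi : V → V → Prop
  bi_symm : ∀ ⦃u v : V⦄, bi u v → bi v u
  dir_irrefl : ∀ v : V, ¬ dir v v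
  bi_irrefl : ∀ v : V, ¬ bi v v

namespace MixedGraph

variable {V : Type u}

/-- Two vertices are adjacent if they are joined by a directed or bidirected edge. -/
def Adjacent (G : MixedGraph V) (u v : V) : Prop :=
  G.dir u v ∨ G.dir v u ∨ G.bi u v

/-- `u` is an ancestor of `v`: there is a directed path `u → ⋯ → v`. -/
def IsAncestor (G : MixedGraph V) (u v : V) : Prop :=
  Relation.TransGen G.dir u v

/-- `an(X)`: the set of ancestors of vertices in `X`. -/
def anc (G : MixedGraph V) (X : Set V) : Set V :=
  {a | ∃ x ∈ X, G.IsAncestor a x}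

/-- `An(X) = an(X) ∪ X`. -/
def Anc (G : MixedGraph V) (X : Set V) : Set V :=
  G.anc X ∪ X

/-- The boundary `bd(u)`: vertices `v` with `v → u` or `v ↔ u`. -/
def bd (G : MixedGraph V) (u : V) : Set V :=
  {v | G.dir v u ∨ G.bi v u}

/-- A partially directed cycle: distinct vertices `f 0, …, f (n-1)` (`n ≥ 3`), read
cyclically, every consecutive pair joined by a directed or bidirected edge, with at
least one directed edge. -/
def IsPartiallyDirectedCycle (G : MixedGraph V) (n : ℕ) (f : ℕ → V) : Prop :=
  3 ≤ n ∧ (∀ i < n, ∀ j < n, f i = f j → i = j) ∧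
  (∀ i < n, G.dir (f i) (f ((i + 1) % n)) ∨ G.bi (f i) (f ((i + 1) % n))) ∧
  (∃ i < n, G.dir (f i) (f ((i + 1) % n)))

/-- An MVR chain graph is a mixed graph with no partially directed cycles. -/
def IsMVRChainGraph (G : MixedGraph V) : Prop :=
  ∀ (n : ℕ) (f : ℕ → V), ¬ G.IsPartiallyDirectedCycle n f

/-- A chain (mixed walk) in a mixed graph: each step uses `a → b`, `a ← b` or `a ↔ b`. -/
inductive Chain (G : MixedGraph V) : V → V → Type u
  | nil (a : V) : Chain G a a
  | fwd {a b c : V} (h : G.dir a b) (p : Chain G b c) : Chain G a c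
  | rev {a b c : V} (h : G.dir b a) (p : Chain G b c) : Chain G a c
  | bid {a b c : V} (h : G.bi a b) (p : Chain G b c) : Chain G a c

variable {G : MixedGraph V}

/-- The list of vertices of a chain. -/
def Chain.support {a b : V} (p : G.Chain a b) : List V :=
  match p with
  | .nil _ => [a]
  | .fwd _ q => a :: q.support
  | .rev _ q => a :: q.support
  | .bid _ q => a :: q.support

/-- For each edge of the chain its pair of arrowhead marks
`(arrowhead at left endpoint, arrowhead at right endpoint)`. -/
def Chain.marks {a b : V} (p : G.Chain a b) : List (Bool × Bool) :=
  match p with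
  | .nil _ => []
  | .fwd _ q => (false, true) :: q.marks
  | .rev _ q => (true, false) :: q.marks
  | .bid _ q => (true, true) :: q.marks

/-- The internal vertex lying between edges `i` and `i+1` of the chain (i.e. the vertex
at position `i+1` of the support) is a collider: both incident edges have an arrowhead
at it. -/
def Chain.ColliderAt {a b : V} (p : G.Chain a b) (i : ℕ) : Prop :=
  ∃ m₁ m₂ : Bool × Bool, p.marks[i]? = some m₁ ∧ p.marks[i + 1]? = some m₂ ∧
    m₁.2 = true ∧ m₂.1 = true

/-- A chain is m-connecting given `Z` if every internal noncollider is not in `Z` and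
every internal collider is in `An(Z)`. -/
def Chain.MConnecting {a b : V} (p : G.Chain a b) (Z : Set V) : Prop :=
  ∀ (i : ℕ) (w : V), p.support[i + 1]? = some w → i + 2 < p.support.length →
    (p.ColliderAt i → w ∈ G.Anc Z) ∧ (¬ p.ColliderAt i → w ∉ Z)

/-- A chain is blocked by `Z` if it is not m-connecting given `Z`. -/
def Chain.Blocked {a b : V} (p : G.Chain a b) (Z : Set V) : Prop :=
  ¬ p.MConnecting Z

/-- Vertices `u` and `v` are m-separated by `Z`: every chain (sequence of distinct
vertices) between them is blocked by `Z`. -/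
def MSeparated (G : MixedGraph V) (u v : V) (Z : Set V) : Prop :=
  ∀ p : G.Chain u v, p.support.Nodup → p.Blocked Z

/-- Sets `X` and `Y` are m-separated by `Z`. -/
def MSeparatedSets (G : MixedGraph V) (X Y Z : Set V) : Prop :=
  ∀ u ∈ X, ∀ v ∈ Y, G.MSeparated u v Z

/-- The undirected graph on `V` whose edges are the bidirected edges of `G`. -/
def biGraph (G : MixedGraph V) : SimpleGraph V where
  Adj a b := G.bi a b
  symm := ⟨fun _ _ h => G.bi_symm h⟩
  loopless := ⟨fun a h => G.bi_irrefl a h⟩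

/-- `τ` is a chain component of `G`: a connected component of the bidirected part. -/
def IsChainComponent (G : MixedGraph V) (τ : Set V) : Prop :=
  ∃ a : V, τ = {w | G.biGraph.Reachable a w}

/-- The parent set `pa_G(τ)` of a set of vertices `τ`. -/
def paSet (G : MixedGraph V) (τ : Set V) : Set V :=
  {a | a ∉ τ ∧ ∃ w ∈ τ, G.dir a w}

/-- `u` and `v` are collider connected: there is a chain (with distinct vertices)
from `u` to `v` on which every nonendpoint vertex is a collider. -/
def ColliderConnected (G : MixedGraph V) (u v : V) : Prop :=
  ∃ p : G.Chain u v, p.support.Nodup ∧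
    ∀ i : ℕ, i + 2 < p.support.length → p.ColliderAt i

/-- `T` with node-sets `C` is an m-separation tree for `G`: `T` is a tree, the nodes
cover `V`, and for every edge `(i, j)` of `T`, with separator `S = C i ∩ C j` and
`V₁`, `V₂` the unions of the node sets of the two subtrees obtained by deleting the
edge, the sets `V₁ \ S` and `V₂ \ S` are m-separated by `S` in `G`. -/
def IsMSepTree (G : MixedGraph V) {ι : Type v} (T : SimpleGraph ι) (C : ι → Set V) :
    Prop :=
  T.IsTree ∧ (⋃ i, C i) = Set.univ ∧
  ∀ i j : ι, T.Adj i j →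
    G.MSeparatedSets
      ((⋃ k ∈ {k : ι | (T.deleteEdges {s(i, j)}).Reachable i k}, C k) \ (C i ∩ C j))
      ((⋃ k ∈ {k : ι | (T.deleteEdges {s(i, j)}).Reachable j k}, C k) \ (C i ∩ C j))
      (C i ∩ C j)

end MixedGraph

/-- An undirected graph is triangulated (chordal) if every cycle of length at least 4
has a chord. -/
def IsChordal {W : Type u} (H : SimpleGraph W) : Prop :=
  ∀ (a : W) (c : H.Walk a a), c.IsCycle → 4 ≤ c.length →
    ∃ x y : W, x ∈ c.support ∧ y ∈ c.support ∧ H.Adj x y ∧ s(x, y) ∉ c.edges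

/-- `s` is a maximal clique of `H`. -/
def IsMaxClique {W : Type u} (H : SimpleGraph W) (s : Set W) : Prop :=
  H.IsClique s ∧ ∀ t : Set W, H.IsClique t → s ⊆ t → t = s

/-- `(T, C)` is a junction tree constructed from the undirected graph `H`:
`T` is a tree whose nodes `C i` are exactly the (maximal) cliques of some triangulated
supergraph `Ht` of `H`, satisfying the junction property. -/
def IsJunctionTreeFor {W : Type u} {ι : Type v} (T : SimpleGraph ι) (C : ι → Set W)
    (H : SimpleGraph W) : Prop :=
  T.IsTree ∧
  ∃ Ht : SimpleGraph W, H ≤ Ht ∧ IsChordal Ht ∧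
    Function.Injective C ∧
    (∀ i : ι, IsMaxClique Ht (C i)) ∧
    (∀ s : Set W, IsMaxClique Ht s → ∃ i : ι, C i = s) ∧
    (∀ (i j : ι) (p : T.Walk i j), p.IsPath → ∀ k ∈ p.support, C i ∩ C j ⊆ C k)

/-- In an undirected graph `H`, `Z` separates `X` and `Y`: every path between a vertex
of `X` and a vertex of `Y` passes through `Z`. -/
def USeparates {W : Type u} (H : SimpleGraph W) (X Y Z : Set W) : Prop :=
  ∀ u ∈ X, ∀ v ∈ Y, ∀ p : H.Walk u v, p.IsPath → ∃ z ∈ Z, z ∈ p.support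

/-- `H` is an undirected independence graph (UIG) for the mixed graph `G`: whenever a
set `Z` separates (nonempty, pairwise disjoint) `X` and `Y` in `H`, `Z` m-separates
`X` and `Y` in `G`. -/
def IsUIG {W : Type u} (H : SimpleGraph W) (G : MixedGraph W) : Prop :=
  ∀ X Y Z : Set W, X.Nonempty → Y.Nonempty → Disjoint X Y → Disjoint X Z →
    Disjoint Y Z → USeparates H X Y Z → G.MSeparatedSets X Y Z

end MVR

/-!
On a chain whose inner vertices are all colliders, every edge at an inner vertex carries an
arrowhead there. Hence only the first edge can be `u → w₁`, only the last can be `w₂ ← v`, and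
all edges in between are bidirected: the chain is `u (→) w₁ ↔ ⋯ ↔ w₂ (←) v`, so `u` and `v` lie
in or point into the chain component of `w₁`. Conversely, a bidirected path inside a chain
component, extended by the directed edges from the parents, is such a chain.
-/

namespace MVR.MixedGraph

variable {V : Type*} {G : MixedGraph V}

namespace Chain

def append : ∀ {a b c : V}, G.Chain a b → G.Chain b c → G.Chain a c
  | _, _, _, .nil _, q => q
  | _, _, _, .fwd h p, q => .fwd h (p.append q)
  | _, _, _, .rev h p, q => .rev h (p.append q)
  | _, _, _, .bid h p, q => .bid h (p.append q)

@[simp]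
theorem support_append {a b c : V} (p : G.Chain a b) (q : G.Chain b c) :
    (p.append q).support = p.support ++ q.support.tail := by
  induction p with
  | nil => cases q <;> rfl
  | _ => simp_all [append, support]

@[simp]
theorem marks_append {a b c : V} (p : G.Chain a b) (q : G.Chain b c) :
    (p.append q).marks = p.marks ++ q.marks := by
  induction p <;> simp_all [append, marks]

theorem length_support {a b : V} (p : G.Chain a b) :
    p.support.length = p.marks.length + 1 := by
  induction p <;> simp_all [support, marks]

def ofBiWalk : ∀ {a b : V}, G.biGraph.Walk a b → G.Chain a b
  | _, _, .nil => .nil _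
  | _, _, .cons h p => .bid h (ofBiWalk p)

@[simp]
theorem support_ofBiWalk {a b : V} (p : G.biGraph.Walk a b) :
    (ofBiWalk p).support = p.support := by
  induction p <;> simp_all [ofBiWalk, support]

@[simp]
theorem marks_ofBiWalk {a b : V} (p : G.biGraph.Walk a b) :
    (ofBiWalk p).marks = List.replicate p.length (true, true) := by
  induction p <;> simp_all [ofBiWalk, marks, List.replicate_succ]

def AllColliders {a b : V} (p : G.Chain a b) : Prop :=
  p.marks.IsChain fun m₁ m₂ => m₁.2 = true ∧ m₂.1 = true

def ArrowheadAtStart {a b : V} (p : G.Chain a b) : Prop :=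
  ∀ m ∈ p.marks.head?, m.1 = true

theorem allColliders_ofBiWalk {a b : V} (P : G.biGraph.Walk a b) :
    (ofBiWalk P).AllColliders := by
  rw [AllColliders, marks_ofBiWalk]
  exact List.isChain_replicate_of_rel _ ⟨rfl, rfl⟩

theorem arrowheadAtStart_ofBiWalk {a b : V} (P : G.biGraph.Walk a b) :
    (ofBiWalk P).ArrowheadAtStart := by
  simp [ArrowheadAtStart, List.head?_replicate]

theorem ArrowheadAtStart.append {a b c : V} {p : G.Chain a b} {q : G.Chain b c}
    (hp : p.ArrowheadAtStart) (hq : q.ArrowheadAtStart) : (p.append q).ArrowheadAtStart := by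
  intro m hm
  rw [marks_append, List.head?_append] at hm
  cases h : p.marks.head? with
  | none => exact hq m (by simpa [h] using hm)
  | some m' => exact hp m (by simpa [h] using hm)

theorem forall_colliderAt_iff_allColliders {a b : V} (p : G.Chain a b) :
    (∀ i, i + 2 < p.support.length → p.ColliderAt i) ↔ p.AllColliders := by
  simp only [AllColliders, List.isChain_iff_getElem, ColliderAt, length_support]
  constructor
  · intro h i hi
    obtain ⟨m₁, m₂, h₁, h₂, e₁, e₂⟩ := h i (by omega)
    rw [List.getElem?_eq_getElem (by omega), Option.some_inj] at h₁ h₂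
    exact ⟨h₁ ▸ e₁, h₂ ▸ e₂⟩
  · intro h i hi
    exact ⟨_, _, List.getElem?_eq_getElem (by omega), List.getElem?_eq_getElem (by omega),
      h i (by omega)⟩

end Chain

theorem colliderConnected_iff_exists_allColliders {u v : V} :
    G.ColliderConnected u v ↔ ∃ p : G.Chain u v, p.support.Nodup ∧ p.AllColliders := by
  simp only [ColliderConnected, Chain.forall_colliderAt_iff_allColliders]

def chainComponent (G : MixedGraph V) (a : V) : Set V :=
  {w | G.biGraph.Reachable a w}

theorem isChainComponent_chainComponent (a : V) : G.IsChainComponent (G.chainComponent a) :=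
  ⟨a, rfl⟩

theorem mem_chainComponent_self (a : V) : a ∈ G.chainComponent a :=
  SimpleGraph.Reachable.refl a

theorem chainComponent_eq_of_bi {a b : V} (h : G.bi a b) :
    G.chainComponent a = G.chainComponent b := by
  have hab : G.biGraph.Reachable a b := SimpleGraph.Adj.reachable h
  ext w
  exact ⟨hab.symm.trans, hab.trans⟩

theorem mem_union_paSet_of_dir {τ : Set V} {x w : V} (hw : w ∈ τ) (h : G.dir x w) :
    x ∈ τ ∪ G.paSet τ := by
  by_cases hx : x ∈ τ
  · exact Or.inl hx
  · exact Or.inr ⟨hx, w, hw, h⟩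

/-- A collider chain with an arrowhead at `a` is `a ↔ ⋯ ↔ w`, possibly followed by a single
edge `w ← b`: a tail at an inner vertex would make it a noncollider. -/
theorem Chain.mem_union_paSet_of_allColliders {a b : V} (p : G.Chain a b)
    (hp : p.AllColliders) (hstart : p.ArrowheadAtStart) :
    b ∈ G.chainComponent a ∪ G.paSet (G.chainComponent a) := by
  induction p with
  | nil a => exact Or.inl (mem_chainComponent_self a)
  | fwd => simp [ArrowheadAtStart, marks] at hstart
  | rev h q =>
    cases q with
    | nil => exact mem_union_paSet_of_dir (mem_chainComponent_self _) h
    | _ => simp [AllColliders, marks] at hp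
  | bid h q ih =>
    rw [chainComponent_eq_of_bi h]
    simp only [AllColliders, marks, List.isChain_cons] at hp
    exact ih hp.2 fun m hm => (hp.1 m hm).2

theorem exists_chainComponent_of_allColliders {u v : V} (p : G.Chain u v)
    (hp : p.AllColliders) :
    ∃ τ, G.IsChainComponent τ ∧ u ∈ τ ∪ G.paSet τ ∧ v ∈ τ ∪ G.paSet τ := by
  cases p with
  | @fwd _ w _ h q =>
    simp only [Chain.AllColliders, Chain.marks, List.isChain_cons] at hp
    exact ⟨_, isChainComponent_chainComponent w,
      mem_union_paSet_of_dir (mem_chainComponent_self w) h,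
      q.mem_union_paSet_of_allColliders hp.2 fun m hm => (hp.1 m hm).2⟩
  | _ =>
    exact ⟨_, isChainComponent_chainComponent u, Or.inl (mem_chainComponent_self u),
      Chain.mem_union_paSet_of_allColliders _ hp
        (by simp [Chain.ArrowheadAtStart, Chain.marks])⟩

theorem exists_isPath_of_mem_chainComponent {a w w' : V} (hw : w ∈ G.chainComponent a)
    (hw' : w' ∈ G.chainComponent a) :
    ∃ P : G.biGraph.Walk w w', P.IsPath ∧ ∀ x ∈ P.support, x ∈ G.chainComponent a := by
  classical
  obtain ⟨P, hP⟩ := (SimpleGraph.Reachable.trans hw.symm hw').exists_isPath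
  exact ⟨P, hP, fun x hx => SimpleGraph.Reachable.trans hw ⟨P.takeUntil x hx⟩⟩

theorem exists_chain_of_mem_union_paSet {a w v : V} (hw : w ∈ G.chainComponent a)
    (hv : v ∈ G.chainComponent a ∪ G.paSet (G.chainComponent a)) :
    ∃ p : G.Chain w v, p.support.Nodup ∧ p.AllColliders ∧ p.ArrowheadAtStart ∧
      ∀ x ∈ p.support, x ∈ G.chainComponent a ∨ x = v := by
  rcases hv with hv | ⟨hv, w', hw', hvw'⟩
  · obtain ⟨P, hP, hPτ⟩ := exists_isPath_of_mem_chainComponent hw hv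
    refine ⟨.ofBiWalk P, by simpa using hP.support_nodup, Chain.allColliders_ofBiWalk P,
      Chain.arrowheadAtStart_ofBiWalk P, ?_⟩
    simpa using fun x hx => Or.inl (hPτ x hx)
  · obtain ⟨P, hP, hPτ⟩ := exists_isPath_of_mem_chainComponent hw hw'
    refine ⟨(Chain.ofBiWalk P).append (.rev hvw' (.nil v)), ?_, ?_, ?_, ?_⟩
    · simp only [Chain.support_append, Chain.support_ofBiWalk, Chain.support, List.tail_cons,
        List.nodup_append, List.nodup_singleton, List.mem_singleton]
      refine ⟨hP.support_nodup, trivial, ?_⟩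
      rintro x hx _ rfl rfl
      exact hv (hPτ x hx)
    · rw [Chain.AllColliders, Chain.marks_append, List.isChain_append]
      refine ⟨Chain.allColliders_ofBiWalk P, List.isChain_singleton _, ?_⟩
      simp [Chain.marks, List.getLast?_replicate]
    · exact (Chain.arrowheadAtStart_ofBiWalk P).append
        (by simp [Chain.ArrowheadAtStart, Chain.marks])
    · simp only [Chain.support_append, Chain.support_ofBiWalk, Chain.support, List.tail_cons,
        List.mem_append, List.mem_singleton]
      rintro x (hx | rfl)
      exacts [Or.inl (hPτ x hx), Or.inr rfl]

theorem colliderConnected_of_mem_union_paSet {τ : Set V} (hτ : G.IsChainComponent τ) {u v : V}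
    (hu : u ∈ τ ∪ G.paSet τ) (hv : v ∈ τ ∪ G.paSet τ) : G.ColliderConnected u v := by
  obtain ⟨a, rfl⟩ := hτ
  rw [colliderConnected_iff_exists_allColliders]
  rcases eq_or_ne u v with rfl | huv
  · exact ⟨.nil u, List.nodup_singleton u, List.isChain_nil⟩
  rcases hu with hu | ⟨hu, w, hw, huw⟩
  · obtain ⟨p, hnd, hcol, -⟩ := exists_chain_of_mem_union_paSet hu hv
    exact ⟨p, hnd, hcol⟩
  · obtain ⟨p, hnd, hcol, hstart, hsupp⟩ := exists_chain_of_mem_union_paSet hw hv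
    refine ⟨.fwd huw p, List.nodup_cons.2 ⟨fun hup => ?_, hnd⟩, ?_⟩
    · exact (hsupp u hup).elim hu huv
    · exact List.isChain_cons.2 ⟨fun m hm => ⟨rfl, hstart m hm⟩, hcol⟩

theorem colliderConnected_iff_exists_chainComponent {u v : V} :
    G.ColliderConnected u v ↔
      ∃ τ, G.IsChainComponent τ ∧ u ∈ τ ∪ G.paSet τ ∧ v ∈ τ ∪ G.paSet τ := by
  refine ⟨fun h => ?_, fun ⟨_, hτ, hu, hv⟩ => colliderConnected_of_mem_union_paSet hτ hu hv⟩
  obtain ⟨p, -, hp⟩ := colliderConnected_iff_exists_allColliders.1 h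
  exact exists_chainComponent_of_allColliders p hp

end MVR.MixedGraph

theorem MVR.colliderConnected_iff_chainComponent_general
    {V : Type} (G : MVR.MixedGraph V) (u v : V) :
    G.ColliderConnected u v ↔
      ∃ τ : Set V, G.IsChainComponent τ ∧
        ((u ∈ τ ∧ v ∈ τ) ∨ (u ∈ τ ∧ v ∈ G.paSet τ) ∨ (v ∈ τ ∧ u ∈ G.paSet τ) ∨
          (u ∈ G.paSet τ ∧ v ∈ G.paSet τ)) := by
  rw [MixedGraph.colliderConnected_iff_exists_chainComponent]
  refine exists_congr fun τ => and_congr_right fun _ => ?_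
  simp only [Set.mem_union]
  tauto

/-- In an MVR chain graph, distinct vertices `u` and `v` are collider
connected iff there is a chain component `τ` with (1) `u, v ∈ τ`, or (2) `u ∈ τ` and
`v ∈ pa_G(τ)`, or (3) `v ∈ τ` and `u ∈ pa_G(τ)`, or (4) `u, v ∈ pa_G(τ)`. -/
theorem MVR.colliderConnected_iff_chainComponent
    {V : Type} (G : MVR.MixedGraph V) (hG : G.IsMVRChainGraph)
    (u v : V) (huv : u ≠ v) :
    G.ColliderConnected u v ↔
      ∃ τ : Set V, G.IsChainComponent τ ∧
        ((u ∈ τ ∧ v ∈ τ) ∨ (u ∈ τ ∧ v ∈ G.paSet τ) ∨ (v ∈ τ ∧ u ∈ G.paSet τ) ∨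
          (u ∈ G.paSet τ ∧ v ∈ G.paSet τ)) :=
  MVR.colliderConnected_iff_chainComponent_general G u v
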